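/- If Γ⁻ is a context assigning ∀⁻ types to variables, y is declared of ∀⁻ type B in Γ⁻, and Γ⁻ ⊢_F (x)τ₁…τₙ y : C with C a ∀⁺ type and x declared of ∀⁻ type E in Γ⁻, then E has the form C₁→(…→(Cₙ→(B→C))…), with Γ⁻ ⊢_F τᵢ : Cᵢ for each i; in particular Γ⁻ ⊢_F (x)τ₁…τₙ : B→C. -/
import Mathlib


/-! Untyped λ-calculus (de Bruijn) and System F realizability semantics. -/

/-- Untyped λ-terms in de Bruijn notation. -/
inductive Lam : Type
  | var : ℕ → Lam
  | app : Lam → Lam → Lam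
  | lam : Lam → Lam
deriving DecidableEq

namespace Lam

/-- Shift the free variables ≥ `d` up by one. -/
def lift (d : ℕ) : Lam → Lam
  | var n => if n < d then var n else var (n + 1)
  | app t u => app (lift d t) (lift d u)
  | lam t => lam (lift (d + 1) t)

/-- Capture-avoiding substitution of `u` for the variable `k` (de Bruijn). -/
def subst : Lam → ℕ → Lam → Lam
  | var n, k, u => if n = k then u else if k < n then var (n - 1) else var n
  | app t s, k, u => app (subst t k u) (subst s k u)
  | lam t, k, u => lam (subst t (k + 1) (lift 0 u))

/-- Free variables of a term. -/
def fv : Lam → Finset ℕ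
  | var n => {n}
  | app t u => fv t ∪ fv u
  | lam t => ((fv t).erase 0).image (· - 1)

/-- One-step β-reduction. -/
inductive Beta : Lam → Lam → Prop
  | beta (t u : Lam) : Beta (app (lam t) u) (subst t 0 u)
  | appL {t t' : Lam} (u : Lam) : Beta t t' → Beta (app t u) (app t' u)
  | appR (t : Lam) {u u' : Lam} : Beta u u' → Beta (app t u) (app t u')
  | lam {t t' : Lam} : Beta t t' → Beta (lam t) (lam t')

/-- Many-step β-reduction. -/
def BetaStar : Lam → Lam → Prop := Relation.ReflTransGen Beta

/-- β-equivalence. -/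
def BetaEq : Lam → Lam → Prop := Relation.EqvGen Beta

/-- One-step η-reduction. -/
inductive Eta : Lam → Lam → Prop
  | eta (t : Lam) : Eta (lam (app (lift 0 t) (var 0))) t
  | appL {t t' : Lam} (u : Lam) : Eta t t' → Eta (app t u) (app t' u)
  | appR (t : Lam) {u u' : Lam} : Eta u u' → Eta (app t u) (app t u')
  | lam {t t' : Lam} : Eta t t' → Eta (lam t) (lam t')

/-- βη-equivalence. -/
def BetaEtaEq : Lam → Lam → Prop := Relation.EqvGen (fun t u => Beta t u ∨ Eta t u)

/-- One-step weak head reduction: contracts the weak head redex `(λ t) u`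
possibly applied to further arguments. -/
inductive Whr : Lam → Lam → Prop
  | head (t u : Lam) : Whr (app (lam t) u) (subst t 0 u)
  | appL {t t' : Lam} (u : Lam) : Whr t t' → Whr (app t u) (app t' u)

/-- Many-step weak head reduction (`≻_f`). -/
def WhrStar : Lam → Lam → Prop := Relation.ReflTransGen Whr

/-- A term is normal when it has no β-redex. -/
def Normal (t : Lam) : Prop := ∀ u, ¬ Beta t u

def Normalizable (t : Lam) : Prop := ∃ u, BetaStar t u ∧ Normal u

/-- `(t)v₁…vₘ`. -/
def appList (t : Lam) (l : List Lam) : Lam := l.foldl app t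

end Lam

/-- A set of λ-terms is saturated when it is closed under weak-head-expansion. -/
def Saturated (G : Set Lam) : Prop := ∀ t u : Lam, Lam.WhrStar t u → u ∈ G → t ∈ G

/-- A set of λ-terms is β-saturated when it is closed under β-expansion. -/
def BetaSaturated (G : Set Lam) : Prop := ∀ t u : Lam, Lam.BetaStar t u → u ∈ G → t ∈ G

/-- `G → G' = {u : ∀ t ∈ G, (u)t ∈ G'}`. -/
def arrowSet (G G' : Set Lam) : Set Lam := {u | ∀ t ∈ G, Lam.app u t ∈ G'}

/-- Types of System F (de Bruijn type variables). -/
inductive Ty : Type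
  | var : ℕ → Ty
  | arr : Ty → Ty → Ty
  | all : Ty → Ty
deriving DecidableEq

namespace Ty

/-- Shift the free type variables ≥ `d` up by one. -/
def lift (d : ℕ) : Ty → Ty
  | var n => if n < d then var n else var (n + 1)
  | arr A B => arr (lift d A) (lift d B)
  | all A => all (lift (d + 1) A)

/-- Capture-avoiding substitution of the type `C` for the type variable `k`. -/
def subst : Ty → ℕ → Ty → Ty
  | var n, k, C => if n = k then C else if k < n then var (n - 1) else var n
  | arr A B, k, C => arr (subst A k C) (subst B k C)
  | all A, k, C => all (subst A (k + 1) (lift 0 C))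

/-- Free type variables. -/
def fv : Ty → Finset ℕ
  | var n => {n}
  | arr A B => fv A ∪ fv B
  | all A => ((fv A).erase 0).image (· - 1)

end Ty

mutual
  /-- ∀⁺ types: types with positive quantifiers. -/
  inductive PosTy : Ty → Prop
    | var (n : ℕ) : PosTy (Ty.var n)
    | arr {B A : Ty} : NegTy B → PosTy A → PosTy (Ty.arr B A)
    | all {A : Ty} : PosTy A → 0 ∈ A.fv → PosTy (Ty.all A)
  /-- ∀⁻ types: types with negative quantifiers. -/
  inductive NegTy : Ty → Prop
    | var (n : ℕ) : NegTy (Ty.var n)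
    | arr {B A : Ty} : PosTy B → NegTy A → NegTy (Ty.arr B A)
end

/-- Typing contexts: a partial assignment of types to (de Bruijn) term variables. -/
def Ctx : Type := ℕ → Option Ty

def Ctx.empty : Ctx := fun _ => none

def Ctx.cons (B : Ty) (Γ : Ctx) : Ctx := fun n =>
  match n with
  | 0 => some B
  | n + 1 => Γ n

/-- Shift all type variables of a context (used for ∀-introduction: the fresh
type variable `0` does not occur in the shifted context). -/
def Ctx.liftTy (Γ : Ctx) : Ctx := fun n => (Γ n).map (Ty.lift 0)

/-- Curry-style typing of System F. -/
inductive TyJ : Ctx → Lam → Ty → Prop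
  | var {Γ : Ctx} {x : ℕ} {A : Ty} : Γ x = some A → TyJ Γ (Lam.var x) A
  | lam {Γ : Ctx} {B C : Ty} {t : Lam} :
      TyJ (Ctx.cons B Γ) t C → TyJ Γ (Lam.lam t) (Ty.arr B C)
  | app {Γ : Ctx} {B C : Ty} {u v : Lam} :
      TyJ Γ u (Ty.arr B C) → TyJ Γ v B → TyJ Γ (Lam.app u v) C
  | allI {Γ : Ctx} {A : Ty} {t : Lam} :
      TyJ (Ctx.liftTy Γ) t A → TyJ Γ t (Ty.all A)
  | allE {Γ : Ctx} {A : Ty} {t : Lam} (C : Ty) :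
      TyJ Γ t (Ty.all A) → TyJ Γ t (Ty.subst A 0 C)

/-- System F0 : System F where ∀-elimination only instantiates by type variables. -/
inductive TyJ0 : Ctx → Lam → Ty → Prop
  | var {Γ : Ctx} {x : ℕ} {A : Ty} : Γ x = some A → TyJ0 Γ (Lam.var x) A
  | lam {Γ : Ctx} {B C : Ty} {t : Lam} :
      TyJ0 (Ctx.cons B Γ) t C → TyJ0 Γ (Lam.lam t) (Ty.arr B C)
  | app {Γ : Ctx} {B C : Ty} {u v : Lam} :
      TyJ0 Γ u (Ty.arr B C) → TyJ0 Γ v B → TyJ0 Γ (Lam.app u v) C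
  | allI {Γ : Ctx} {A : Ty} {t : Lam} :
      TyJ0 (Ctx.liftTy Γ) t A → TyJ0 Γ t (Ty.all A)
  | allE {Γ : Ctx} {A : Ty} {t : Lam} (Y : ℕ) :
      TyJ0 Γ t (Ty.all A) → TyJ0 Γ t (Ty.subst A 0 (Ty.var Y))

/-- Interpretations: assignments of sets of λ-terms to type variables. -/
def Interp : Type := ℕ → Set Lam

def Interp.cons (G : Set Lam) (I : Interp) : Interp := fun n =>
  match n with
  | 0 => G
  | n + 1 => I n

/-- Interpretation of types, parameterized by the admissibility class `C` of
sets used to interpret type variables (e.g. `Saturated`). -/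
def interpC (C : Set Lam → Prop) : Ty → Interp → Set Lam
  | Ty.var n, I => I n
  | Ty.arr A B, I => arrowSet (interpC C A I) (interpC C B I)
  | Ty.all A, I => ⋂ (G : Set Lam) (_ : C G), interpC C A (Interp.cons G I)

/-- Girard–Krivine interpretation `|A|_I` with saturated sets. -/
def interp : Ty → Interp → Set Lam := interpC Saturated

/-- `|A|`, the intersection of `|A|_I` over all admissible interpretations. -/
def SemC (C : Set Lam → Prop) (A : Ty) : Set Lam :=
  {t | ∀ I : Interp, (∀ n, C (I n)) → t ∈ interpC C A I}

/-- `|A| = ⋂_I |A|_I` over interpretations into saturated sets. -/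
def Sem (A : Ty) : Set Lam := SemC Saturated A

/-! ### Auxiliary lemmas for the head-variable analysis -/

namespace Lam

theorem appList_cons' (t a : Lam) (l : List Lam) :
    appList t (a :: l) = appList (app t a) l := rfl

theorem appList_snoc (t : Lam) (l : List Lam) (a : Lam) :
    appList t (l ++ [a]) = app (appList t l) a := by
  simp [appList, List.foldl_append]

theorem appList_eq_var : ∀ {l : List Lam} {t : Lam} {z : ℕ},
    appList t l = var z → l = [] ∧ t = var z := by
  intro l
  induction l with
  | nil => intro t z h; exact ⟨rfl, h⟩
  | cons a l ih =>
    intro t z h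
    rw [appList_cons'] at h
    obtain ⟨_, h2⟩ := ih h
    cases h2

theorem appList_eq_lam : ∀ {l : List Lam} {t s : Lam},
    appList t l = Lam.lam s → l = [] ∧ t = Lam.lam s := by
  intro l
  induction l with
  | nil => intro t s h; exact ⟨rfl, h⟩
  | cons a l ih =>
    intro t s h
    rw [appList_cons'] at h
    obtain ⟨_, h2⟩ := ih h
    cases h2

theorem appList_eq_app : ∀ {l : List Lam} {t u v : Lam},
    appList t l = app u v →
    (l = [] ∧ t = app u v) ∨ ∃ l', l = l' ++ [v] ∧ u = appList t l' := by
  intro l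
  induction l with
  | nil => intro t u v h; exact Or.inl ⟨rfl, h⟩
  | cons a l ih =>
    intro t u v h
    rw [appList_cons'] at h
    rcases ih h with ⟨rfl, h2⟩ | ⟨l', rfl, rfl⟩
    · injection h2 with h3 h4
      subst h3; subst h4
      exact Or.inr ⟨[], rfl, rfl⟩
    · exact Or.inr ⟨a :: l', rfl, rfl⟩

end Lam

namespace Ty

theorem subst_lift (A : Ty) : ∀ (d : ℕ) (C : Ty), Ty.subst (Ty.lift d A) d C = A := by
  induction A with
  | var n =>
    intro d C
    by_cases h : n < d
    · have h1 : ¬ n = d := by omega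
      have h2 : ¬ d < n := by omega
      simp [Ty.lift, Ty.subst, h, h1, h2]
    · have h1 : ¬ (n + 1 = d) := by omega
      have h2 : d < n + 1 := by omega
      simp [Ty.lift, Ty.subst, h, h1, h2]
  | arr A B ihA ihB => intro d C; simp [Ty.lift, Ty.subst, ihA, ihB]
  | all A ih => intro d C; simp [Ty.lift, Ty.subst, ih]

theorem lift_lift (A : Ty) : ∀ (d e : ℕ), d ≤ e →
    Ty.lift d (Ty.lift e A) = Ty.lift (e + 1) (Ty.lift d A) := by
  induction A with
  | var n =>
    intro d e hde
    by_cases h1 : n < e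
    · by_cases h2 : n < d
      · have h3 : n < e + 1 := by omega
        simp [Ty.lift, h1, h2, h3]
      · have h3 : n + 1 < e + 1 := by omega
        simp [Ty.lift, h1, h2, h3]
    · have h2 : ¬ n < d := by omega
      have h3 : ¬ n + 1 < d := by omega
      have h4 : ¬ n + 1 < e + 1 := by omega
      simp [Ty.lift, h1, h2, h3, h4]
  | arr A B ihA ihB => intro d e h; simp [Ty.lift, ihA d e h, ihB d e h]
  | all A ih => intro d e h; simp [Ty.lift, ih (d+1) (e+1) (by omega)]

theorem mem_fv_all {d : ℕ} {X : Ty} : d ∈ (Ty.all X).fv ↔ d + 1 ∈ X.fv := by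
  simp only [Ty.fv, Finset.mem_image, Finset.mem_erase]
  constructor
  · rintro ⟨m, ⟨hm0, hm⟩, rfl⟩
    have : m - 1 + 1 = m := by omega
    rwa [this]
  · intro h
    exact ⟨d + 1, ⟨by omega, h⟩, by omega⟩

theorem mem_fv_lift_of_lt (A : Ty) : ∀ (d m : ℕ), m < d →
    (m ∈ (Ty.lift d A).fv ↔ m ∈ A.fv) := by
  induction A with
  | var n =>
    intro d m hm
    by_cases h : n < d
    · simp [Ty.lift, h]
    · simp [Ty.lift, Ty.fv, h]; omega
  | arr A B ihA ihB => intro d m hm; simp [Ty.lift, Ty.fv, ihA d m hm, ihB d m hm]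
  | all A ih =>
    intro d m hm
    show m ∈ (Ty.all (Ty.lift (d+1) A)).fv ↔ _
    rw [mem_fv_all, mem_fv_all, ih (d+1) (m+1) (by omega)]

theorem not_mem_fv_lift (A : Ty) : ∀ d : ℕ, d ∉ (Ty.lift d A).fv := by
  induction A with
  | var n =>
    intro d
    by_cases h : n < d <;> simp [Ty.lift, Ty.fv, h] <;> omega
  | arr A B ihA ihB => intro d; simp [Ty.lift, Ty.fv]; exact ⟨ihA d, ihB d⟩
  | all A ih =>
    intro d h
    rw [show Ty.lift d (Ty.all A) = Ty.all (Ty.lift (d+1) A) from rfl, mem_fv_all] at h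
    exact ih (d+1) h

end Ty

theorem posneg_lift (A : Ty) : ∀ d : ℕ,
    (PosTy A → PosTy (A.lift d)) ∧ (NegTy A → NegTy (A.lift d)) := by
  induction A with
  | var n =>
    intro d
    constructor
    · intro _; simp only [Ty.lift]; split <;> exact PosTy.var _
    · intro _; simp only [Ty.lift]; split <;> exact NegTy.var _
  | arr B A ihB ihA =>
    intro d
    constructor
    · intro h
      cases h with
      | arr hB hA => exact PosTy.arr ((ihB d).2 hB) ((ihA d).1 hA)
    · intro h
      cases h with
      | arr hB hA => exact NegTy.arr ((ihB d).1 hB) ((ihA d).2 hA)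
  | all A ih =>
    intro d
    constructor
    · intro h
      cases h with
      | all hA hfv =>
        exact PosTy.all ((ih (d+1)).1 hA)
          ((Ty.mem_fv_lift_of_lt A (d+1) 0 (by omega)).2 hfv)
    · intro h; cases h

/-- Iterated "generalize then freshen": `allLift k F = ∀…∀ (lift⁰)ᵏ F`. -/
def allLift : ℕ → Ty → Ty
  | 0, F => F
  | k+1, F => Ty.all (allLift k (Ty.lift 0 F))

theorem subst_allLift : ∀ (j : ℕ) (F : Ty) (d : ℕ) (D : Ty),
    Ty.subst (allLift j (Ty.lift d F)) d D = allLift j F := by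
  intro j
  induction j with
  | zero => intro F d D; exact Ty.subst_lift F d D
  | succ j ih =>
    intro F d D
    show Ty.subst (Ty.all (allLift j (Ty.lift 0 (Ty.lift d F)))) d D
        = Ty.all (allLift j (Ty.lift 0 F))
    rw [Ty.lift_lift F 0 d (Nat.zero_le d)]
    show Ty.all (Ty.subst (allLift j (Ty.lift (d+1) (Ty.lift 0 F))) (d+1) (Ty.lift 0 D)) = _
    rw [ih (Ty.lift 0 F) (d+1) (Ty.lift 0 D)]

theorem not_mem_fv_allLift : ∀ (j : ℕ) (F : Ty) (d : ℕ),
    d ∉ (allLift j (Ty.lift d F)).fv := by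
  intro j
  induction j with
  | zero => exact fun F d => Ty.not_mem_fv_lift F d
  | succ j ih =>
    intro F d h
    rw [show allLift (j+1) (Ty.lift d F) = Ty.all (allLift j (Ty.lift 0 (Ty.lift d F))) from rfl,
        Ty.mem_fv_all, Ty.lift_lift F 0 d (Nat.zero_le d)] at h
    exact ih (Ty.lift 0 F) (d+1) h

/-- The types derivable for a term from hypothesis type `F` using only
∀-introduction and ∀-elimination. -/
inductive Gen : Ty → Ty → Prop
  | refl (F : Ty) : Gen F F
  | allI {F A : Ty} : Gen (Ty.lift 0 F) A → Gen F (Ty.all A)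
  | allE {F A : Ty} (D : Ty) : Gen F (Ty.all A) → Gen F (Ty.subst A 0 D)

theorem gen_allLift : ∀ {F A : Ty}, Gen F A → NegTy F → ∃ k, A = allLift k F := by
  intro F₁ A₁ h
  induction h with
  | refl F => exact fun _ => ⟨0, rfl⟩
  | @allI F A h ih =>
    intro hF
    obtain ⟨k, rfl⟩ := ih ((posneg_lift _ 0).2 hF)
    exact ⟨k + 1, rfl⟩
  | @allE F A D h ih =>
    intro hF
    obtain ⟨k, hk⟩ := ih hF
    cases k with
    | zero =>
      exfalso
      rw [show allLift 0 F = F from rfl] at hk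
      rw [← hk] at hF
      cases hF
    | succ j =>
      rw [show allLift (j+1) F = Ty.all (allLift j (Ty.lift 0 F)) from rfl] at hk
      injection hk with hk'
      exact ⟨j, by rw [hk']; exact subst_allLift j F 0 D⟩

theorem gen_neg_pos {F A : Ty} (h : Gen F A) (hF : NegTy F) (hA : PosTy A) : A = F := by
  obtain ⟨k, rfl⟩ := gen_allLift h hF
  cases k with
  | zero => rfl
  | succ j =>
    cases hA with
    | all hA hfv => exact absurd hfv (not_mem_fv_allLift j F 0)

theorem gen_neg_arr {F B C : Ty} (h : Gen F (Ty.arr B C)) (hF : NegTy F) :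
    F = Ty.arr B C := by
  obtain ⟨k, hk⟩ := gen_allLift h hF
  cases k with
  | zero => exact hk.symm
  | succ j => cases hk

theorem neg_foldr : ∀ (Cs : List Ty) (F : Ty), NegTy (Cs.foldr Ty.arr F) →
    (∀ D ∈ Cs, PosTy D) ∧ NegTy F := by
  intro Cs
  induction Cs with
  | nil => exact fun F h => ⟨by simp, h⟩
  | cons D Cs ih =>
    intro F h
    cases h with
    | arr hD hrest =>
      obtain ⟨h1, h2⟩ := ih F hrest
      refine ⟨?_, h2⟩
      intro E hE
      rcases List.mem_cons.1 hE with rfl | hE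
      · exact hD
      · exact h1 E hE

theorem lift_foldr_decomp : ∀ (Cs' : List Ty) (E F' : Ty),
    Ty.lift 0 E = Cs'.foldr Ty.arr F' →
    ∃ (Cs : List Ty) (F : Ty),
      E = Cs.foldr Ty.arr F ∧ Cs' = Cs.map (Ty.lift 0) ∧ F' = Ty.lift 0 F := by
  intro Cs'
  induction Cs' with
  | nil => exact fun E F' h => ⟨[], E, rfl, rfl, h.symm⟩
  | cons D Cs' ih =>
    intro E F' h
    cases E with
    | var n => simp [Ty.lift] at h
    | all A => simp [Ty.lift] at h
    | arr E1 E2 =>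
      rw [show Ty.lift 0 (Ty.arr E1 E2) = Ty.arr (Ty.lift 0 E1) (Ty.lift 0 E2) from rfl] at h
      injection h with h1 h2
      obtain ⟨Cs, F, rfl, rfl, rfl⟩ := ih E2 F' h2
      exact ⟨E1 :: Cs, F, rfl, by simp [← h1], rfl⟩

theorem forall₂_snoc {α β : Type*} {R : α → β → Prop} :
    ∀ {l : List α} {Cs : List β} {a : α} {b : β},
    List.Forall₂ R l Cs → R a b → List.Forall₂ R (l ++ [a]) (Cs ++ [b]) := by
  intro l Cs a b h hab
  induction h with
  | nil => exact List.Forall₂.cons hab List.Forall₂.nil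
  | cons h _ ih => exact List.Forall₂.cons h ih

theorem forall₂_snoc_inv {α β : Type*} {R : α → β → Prop} :
    ∀ {l : List α} {a : α} {Cs : List β},
    List.Forall₂ R (l ++ [a]) Cs →
    ∃ Cs' b, Cs = Cs' ++ [b] ∧ List.Forall₂ R l Cs' ∧ R a b := by
  intro l
  induction l with
  | nil =>
    intro a Cs h
    cases h with
    | cons hab h' => cases h'; exact ⟨[], _, rfl, List.Forall₂.nil, hab⟩
  | cons x l ih =>
    intro a Cs h
    cases h with
    | cons hx h' =>
      obtain ⟨Cs', b, rfl, h1, h2⟩ := ih h'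
      exact ⟨_ :: Cs', b, rfl, List.Forall₂.cons hx h1, h2⟩

theorem tyJ_appList {Γ : Ctx} : ∀ {l : List Lam} {Cs : List Ty},
    List.Forall₂ (TyJ Γ) l Cs → ∀ {t : Lam} {R : Ty},
    TyJ Γ t (Cs.foldr Ty.arr R) → TyJ Γ (Lam.appList t l) R := by
  intro l Cs h
  induction h with
  | nil => exact fun ht => ht
  | cons hx h ih => exact fun ht => ih (TyJ.app ht hx)

theorem tyJ_unlift {Γ : Ctx} {u : Lam} {C : Ty}
    (h : TyJ (Ctx.liftTy Γ) u (Ty.lift 0 C)) : TyJ Γ u C := by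
  have h2 := TyJ.allE (Ty.var 0) (TyJ.allI h)
  rwa [Ty.subst_lift] at h2

theorem forall₂_unlift {Γ : Ctx} : ∀ {Cs : List Ty} {l : List Lam},
    List.Forall₂ (TyJ (Ctx.liftTy Γ)) l (Cs.map (Ty.lift 0)) →
    List.Forall₂ (TyJ Γ) l Cs := by
  intro Cs
  induction Cs with
  | nil => intro l h; cases h; exact List.Forall₂.nil
  | cons C Cs ih =>
    intro l h
    cases h with
    | cons hx h' => exact List.Forall₂.cons (tyJ_unlift hx) (ih h')

theorem liftTy_neg {Γ : Ctx} (hΓ : ∀ z D, Γ z = some D → NegTy D) :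
    ∀ z D, Ctx.liftTy Γ z = some D → NegTy D := by
  intro z D h
  unfold Ctx.liftTy at h
  cases hz : Γ z with
  | none => rw [hz] at h; cases h
  | some D' =>
    rw [hz] at h
    injection h with h'
    rw [← h']
    exact (posneg_lift D' 0).2 (hΓ z D' hz)

theorem head_var_main : ∀ {Γ : Ctx} {t : Lam} {A : Ty}, TyJ Γ t A →
    (∀ z D, Γ z = some D → NegTy D) →
    ∀ (x : ℕ) (l : List Lam), t = Lam.appList (Lam.var x) l →
    ∀ E, Γ x = some E →
    ∃ (Cs : List Ty) (F : Ty),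
      E = Cs.foldr Ty.arr F ∧ List.Forall₂ (TyJ Γ) l Cs ∧ Gen F A := by
  intro Γ t A h
  induction h with
  | @var Γ z A hz =>
    intro hΓ x l ht E hE
    obtain ⟨rfl, hv⟩ := Lam.appList_eq_var ht.symm
    injection hv with hxz
    subst hxz
    rw [hE] at hz
    injection hz with hz'
    exact ⟨[], E, rfl, List.Forall₂.nil, by rw [← hz']; exact Gen.refl E⟩
  | @lam Γ B C t h ih =>
    intro hΓ x l ht E hE
    obtain ⟨_, h2⟩ := Lam.appList_eq_lam ht.symm
    cases h2
  | @app Γ B₀ C₀ u v hu hv ihu ihv =>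
    intro hΓ x l ht E hE
    rcases Lam.appList_eq_app ht.symm with ⟨rfl, h2⟩ | ⟨l', rfl, rfl⟩
    · cases h2
    · obtain ⟨Cs, F, hEq, hF2, hGen⟩ := ihu hΓ x l' rfl E hE
      have hF : NegTy F := (neg_foldr Cs F (by rw [← hEq]; exact hΓ x E hE)).2
      have hFeq : F = Ty.arr B₀ C₀ := gen_neg_arr hGen hF
      subst hFeq
      refine ⟨Cs ++ [B₀], C₀, ?_, forall₂_snoc hF2 hv, Gen.refl _⟩
      rw [hEq]
      simp [List.foldr_append]
  | @allI Γ A₀ t h ih =>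
    intro hΓ x l ht E hE
    obtain ⟨Cs', F', hEq', hF2', hGen'⟩ := ih (liftTy_neg hΓ) x l ht (Ty.lift 0 E)
      (by unfold Ctx.liftTy; rw [hE]; rfl)
    obtain ⟨Cs, F, rfl, rfl, rfl⟩ := lift_foldr_decomp Cs' _ F' hEq'
    exact ⟨Cs, F, rfl, forall₂_unlift hF2', Gen.allI hGen'⟩
  | @allE Γ A₀ t D h ih =>
    intro hΓ x l ht E hE
    obtain ⟨Cs, F, hEq, hF2, hGen⟩ := ih hΓ x l ht E hE
    exact ⟨Cs, F, hEq, hF2, Gen.allE D hGen⟩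

/-- head-variable analysis, Case 1 of Lemma 2(i): if all types in
`Γ⁻` are ∀⁻, `y : B` and `x : E` are in `Γ⁻`, `C` is ∀⁺ and
`Γ⁻ ⊢_F (x)τ₁…τₙ y : C`, then `E = C₁→(…→(Cₙ→(B→C))…)` with `Γ⁻ ⊢_F τᵢ : Cᵢ`,
and in particular `Γ⁻ ⊢_F (x)τ₁…τₙ : B→C`. -/
theorem head_variable_analysis (Γ : Ctx) (hΓ : ∀ x A, Γ x = some A → NegTy A)
    (x y : ℕ) (B E C : Ty) (τs : List Lam)
    (hy : Γ y = some B) (hx : Γ x = some E) (hC : PosTy C)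
    (hder : TyJ Γ (Lam.app (Lam.appList (Lam.var x) τs) (Lam.var y)) C) :
    ∃ Cs : List Ty,
      E = Cs.foldr Ty.arr (Ty.arr B C) ∧
      List.Forall₂ (fun τ D => TyJ Γ τ D) τs Cs ∧
      TyJ Γ (Lam.appList (Lam.var x) τs) (Ty.arr B C) := by
  rw [show Lam.app (Lam.appList (Lam.var x) τs) (Lam.var y)
        = Lam.appList (Lam.var x) (τs ++ [Lam.var y]) from (Lam.appList_snoc _ _ _).symm] at hder
  obtain ⟨Cs, F, hEq, hF2, hGen⟩ := head_var_main hder hΓ x (τs ++ [Lam.var y]) rfl E hx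
  have hEneg : NegTy E := hΓ x E hx
  have hnf := neg_foldr Cs F (by rw [← hEq]; exact hEneg)
  have hFC : C = F := gen_neg_pos hGen hnf.2 hC
  obtain ⟨Cs', Bl, rfl, hF2', hyB⟩ := forall₂_snoc_inv hF2
  have hBlPos : PosTy Bl := hnf.1 Bl (by simp)
  obtain ⟨Cs₀, F₀, hB0, hF20, hGen0⟩ := head_var_main hyB hΓ y [] rfl B hy
  have hCs0 : Cs₀ = [] := by cases hF20; rfl
  subst hCs0
  rw [List.foldr_nil] at hB0
  rw [← hB0] at hGen0
  have hBl : Bl = B := gen_neg_pos hGen0 (hΓ y B hy) hBlPos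
  subst hBl
  have hEfin : E = Cs'.foldr Ty.arr (Ty.arr Bl C) := by
    rw [hEq, hFC]
    simp [List.foldr_append]
  refine ⟨Cs', hEfin, hF2', ?_⟩
  have h2 : TyJ Γ (Lam.var x) (Cs'.foldr Ty.arr (Ty.arr Bl C)) := by
    rw [← hEfin]; exact TyJ.var hx
  exact tyJ_appList hF2' h2
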